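/- Let F ∈ ℝ with F > 0. Then U_F maps ℂ ∖ [−F,F] bijectively onto the punctured open unit disc {u ∈ ℂ : 0 < |u| < 1}; that is, U_F is injective on ℂ ∖ [−F,F] and its image of ℂ ∖ [−F,F] equals (Metric.ball 0 1) ∖ {0}. -/

import Mathlib

open scoped Classical

/-- The real segment `[−F, F]` viewed as a subset of `ℂ`. -/
def segC (F : ℝ) : Set ℂ := {z : ℂ | z.im = 0 ∧ -F ≤ z.re ∧ z.re ≤ F}

/-- `ℂ⁺`: the open right half-plane together with the nonnegative imaginary axis. -/
def Cplus : Set ℂ := {z : ℂ | 0 < z.re ∨ (z.re = 0 ∧ 0 ≤ z.im)}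

/-- `U_F(z) = (z ∓ √(z²−F²))/F`, with `−` on `ℂ⁺` and `+` off `ℂ⁺`
(principal branch of the square root). -/
noncomputable def funU (F : ℝ) (z : ℂ) : ℂ :=
  if z ∈ Cplus then (z - (z ^ 2 - (F : ℂ) ^ 2) ^ ((1 : ℂ) / 2)) / F
  else (z + (z ^ 2 - (F : ℂ) ^ 2) ^ ((1 : ℂ) / 2)) / F

/-- `T_F(z) = ±√(z²−F²)`, with `+` on `ℂ⁺` and `−` off `ℂ⁺`. -/
noncomputable def funT (F : ℝ) (z : ℂ) : ℂ :=
  if z ∈ Cplus then (z ^ 2 - (F : ℂ) ^ 2) ^ ((1 : ℂ) / 2)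
  else -((z ^ 2 - (F : ℂ) ^ 2) ^ ((1 : ℂ) / 2))

/-- `W_F(z) = ((z+F)/(z−F))^{1/4} + ((z−F)/(z+F))^{1/4}` (principal fourth roots). -/
noncomputable def funW (F : ℝ) (z : ℂ) : ℂ :=
  ((z + F) / (z - F)) ^ ((1 : ℂ) / 4) + ((z - F) / (z + F)) ^ ((1 : ℂ) / 4)
/-!
Let `T = funT F z`, the branch of `√(z² − F²)` taken in the half-plane of `z`. Then
`funU F z = (z − T)/F` and `(z + T)/F` are reciprocal, and since
`‖z + T‖² − ‖z − T‖² = 4⟪z, T⟫`, the first one lies in the unit disc as soon as `⟪z, T⟫ > 0`.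
That inner product is `≥ 0` because the principal square root lies in `ℂ⁺`, and it can only
vanish for `z` on the segment. Hence `funU F` is a right inverse of the Joukowski map
`J u = F (u + u⁻¹)/2` with values in the punctured disc. Conversely `J` is injective there
(`J u = J v` iff `u = v` or `u v = 1`) and avoids the segment, since `J u ∈ [−F, F]` forces
`‖u‖ = 1`.
-/

open Complex Set Metric
open scoped InnerProductSpace

lemma real_inner_eq_re_mul_add_im_mul (z w : ℂ) : ⟪z, w⟫_ℝ = z.re * w.re + z.im * w.im := by
  simp [Complex.inner]; ring

lemma real_inner_nonneg_of_mem_Cplus {z s : ℂ} (hz : z ∈ Cplus) (hs : s ∈ Cplus)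
    (h : s.re * s.im = z.re * z.im) : 0 ≤ ⟪z, s⟫_ℝ := by
  rw [real_inner_eq_re_mul_add_im_mul]
  rcases hz with hz | ⟨hz, hz'⟩ <;> rcases hs with hs | ⟨hs, hs'⟩
  · have hsq : z.im * s.im * (z.re * s.re) = (s.re * s.im) ^ 2 := by
      linear_combination (-(s.re * s.im)) * h
    have := (mul_nonneg_iff_of_pos_right (mul_pos hz hs)).1 (hsq ▸ sq_nonneg _)
    positivity
  · have : z.im = 0 := by
      rw [hs, zero_mul] at h
      exact (mul_eq_zero.1 h.symm).resolve_left hz.ne'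
    simp [hs, this]
  · have : s.im = 0 := by
      rw [hz, zero_mul] at h
      exact (mul_eq_zero.1 h).resolve_left hs.ne'
    simp [hz, this]
  · rw [hz, hs]; positivity

lemma mem_segC_of_real_inner_eq_zero {F : ℝ} (hF : 0 ≤ F) {z T : ℂ}
    (hT : T ^ 2 = z ^ 2 - (F : ℂ) ^ 2) (h : ⟪z, T⟫_ℝ = 0) : z ∈ segC F := by
  rw [real_inner_eq_re_mul_add_im_mul] at h
  have hre := congrArg re hT
  have him := congrArg im hT
  simp only [sq, mul_re, mul_im, sub_re, sub_im, ofReal_re, ofReal_im] at hre him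
  set a := z.re; set b := z.im; set p := T.re; set r := T.im
  -- `(p, r) ⊥ (a, b)`, so `N • (p, r) = k • (-b, a)`; squaring this against `hT` gives `hab`, `hsq`.
  set N := a ^ 2 + b ^ 2; set k := a * r - b * p
  have hp : N * p = -b * k := by linear_combination a * h
  have hr : N * r = a * k := by linear_combination b * h
  have hab : a * b * (N ^ 2 + k ^ 2) = 0 := by
    linear_combination (-N ^ 2 / 2) * him + (N * r) * hp + (-b * k) * hr
  have hsq : (a ^ 2 - b ^ 2) * (N ^ 2 + k ^ 2) = N ^ 2 * F ^ 2 := by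
    linear_combination (-N ^ 2) * hre + (N * p - b * k) * hp - (N * r + a * k) * hr
  have hb : b = 0 := by
    by_contra hb
    have hpos : 0 < N ^ 2 + k ^ 2 := by
      have : 0 < N := by positivity
      positivity
    have ha : a = 0 := by
      simpa [hb, hpos.ne'] using hab
    rw [ha] at hsq
    nlinarith [mul_pos (pow_pos (sq_pos_of_ne_zero hb) 1) hpos]
  have ha : a ^ 2 ≤ F ^ 2 := by
    rcases eq_or_ne a 0 with ha | ha
    · simp [ha, sq_nonneg]
    have hN : N = a ^ 2 := by simp [N, hb]
    rw [hN] at hsq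
    have ha4 : 0 < (a ^ 2) ^ 2 := by positivity
    nlinarith [sq_nonneg k, sq_nonneg a]
  exact ⟨hb, by nlinarith, by nlinarith⟩

lemma cpow_half_sq (w : ℂ) : (w ^ ((1 : ℂ) / 2)) ^ 2 = w := by
  rw [one_div]; exact_mod_cast cpow_nat_inv_pow w two_ne_zero

lemma cpow_half_mem_Cplus (w : ℂ) : w ^ ((1 : ℂ) / 2) ∈ Cplus := by
  rw [one_div]
  by_cases hw : 0 ≤ w.im
  · rcases (cpow_inv_two_re w ▸ Real.sqrt_nonneg _ : 0 ≤ (w ^ (2⁻¹ : ℂ)).re).lt_or_eq with h | h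
    · exact Or.inl h
    · exact Or.inr ⟨h.symm, cpow_inv_two_im_eq_sqrt hw ▸ Real.sqrt_nonneg _⟩
  · left
    rw [cpow_inv_two_re]
    have := abs_re_lt_norm.2 (show w.im ≠ 0 by linarith)
    exact Real.sqrt_pos.2 (by linarith [neg_abs_le w.re])

lemma neg_mem_Cplus_of_notMem {z : ℂ} (hz : z ∉ Cplus) : -z ∈ Cplus := by
  simp only [Cplus, mem_ofPred_eq, neg_re, neg_im, not_or, not_and, not_lt, not_le] at hz ⊢
  rcases hz.1.lt_or_eq with h | h
  · exact Or.inl (by linarith)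
  · exact Or.inr ⟨by rw [h, neg_zero], by linarith [hz.2 h]⟩

lemma funT_sq (F : ℝ) (z : ℂ) : funT F z ^ 2 = z ^ 2 - (F : ℂ) ^ 2 := by
  unfold funT; split_ifs <;> simp

lemma real_inner_funT_pos {F : ℝ} (hF : 0 ≤ F) {z : ℂ} (hz : z ∉ segC F) :
    0 < ⟪z, funT F z⟫_ℝ := by
  have hs := cpow_half_mem_Cplus (z ^ 2 - (F : ℂ) ^ 2)
  have hs2 := cpow_half_sq (z ^ 2 - (F : ℂ) ^ 2)
  set s := (z ^ 2 - (F : ℂ) ^ 2) ^ ((1 : ℂ) / 2)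
  have hsim : s.re * s.im = z.re * z.im := by
    have h := congrArg im hs2
    simp only [sq, mul_im, sub_im, ofReal_re, ofReal_im] at h
    linarith
  have hnonneg : 0 ≤ ⟪z, funT F z⟫_ℝ := by
    unfold funT
    split_ifs with hzC
    · exact real_inner_nonneg_of_mem_Cplus hzC hs hsim
    · have := real_inner_nonneg_of_mem_Cplus (neg_mem_Cplus_of_notMem hzC) hs
        (by rw [neg_re, neg_im]; linarith)
      rwa [inner_neg_left, ← inner_neg_right] at this
  exact hnonneg.lt_of_ne' fun h => hz (mem_segC_of_real_inner_eq_zero hF (funT_sq F z) h)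

lemma funU_eq (F : ℝ) (z : ℂ) : funU F z = (z - funT F z) / F := by
  unfold funU funT; split_ifs <;> ring

lemma sub_funT_mul_add_funT (F : ℝ) (z : ℂ) :
    (z - funT F z) * (z + funT F z) = (F : ℂ) ^ 2 := by
  linear_combination -funT_sq F z

lemma funU_mul_add_funT {F : ℝ} (hF : F ≠ 0) (z : ℂ) :
    funU F z * ((z + funT F z) / F) = 1 := by
  have hF' : (F : ℂ) ≠ 0 := ofReal_ne_zero.2 hF
  rw [funU_eq]; field_simp
  exact sub_funT_mul_add_funT F z

lemma funU_ne_zero {F : ℝ} (hF : F ≠ 0) (z : ℂ) : funU F z ≠ 0 :=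
  left_ne_zero_of_mul_eq_one (funU_mul_add_funT hF z)

lemma norm_funU_lt_one {F : ℝ} (hF : 0 < F) {z : ℂ} (hz : z ∉ segC F) : ‖funU F z‖ < 1 := by
  set T := funT F z
  have hlt : ‖z - T‖ < ‖z + T‖ := by
    rw [← pow_lt_pow_iff_left₀ (norm_nonneg _) (norm_nonneg _) two_ne_zero,
      norm_add_sq_real, norm_sub_sq_real]
    linarith [real_inner_funT_pos hF.le hz]
  have hprod : ‖z - T‖ * ‖z + T‖ = F ^ 2 := by
    rw [← norm_mul, sub_funT_mul_add_funT, norm_pow, norm_real, Real.norm_eq_abs, sq_abs]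
  have hsub : ‖z - T‖ < F := by nlinarith [norm_nonneg (z - T)]
  rwa [funU_eq, norm_div, norm_real, Real.norm_eq_abs, abs_of_pos hF, div_lt_one hF]

noncomputable def joukowski (F : ℝ) (u : ℂ) : ℂ := F * (u + u⁻¹) / 2

lemma joukowski_funU {F : ℝ} (hF : F ≠ 0) (z : ℂ) : joukowski F (funU F z) = z := by
  have hF' : (F : ℂ) ≠ 0 := ofReal_ne_zero.2 hF
  rw [joukowski, inv_eq_of_mul_eq_one_right (funU_mul_add_funT hF z), funU_eq]
  field_simp
  ring

lemma joukowski_injOn {F : ℝ} (hF : F ≠ 0) : InjOn (joukowski F) (ball 0 1 \ {0}) := by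
  rintro u ⟨hu1, hu0⟩ v ⟨hv1, hv0⟩ huv
  rw [mem_singleton_iff] at hu0 hv0
  rw [mem_ball_zero_iff] at hu1 hv1
  have hF' : (F : ℂ) ≠ 0 := ofReal_ne_zero.2 hF
  have hfac : (u - v) * (u * v - 1) = 0 := by
    unfold joukowski at huv
    field_simp at huv
    linear_combination huv
  have huv1 : u * v ≠ 1 := fun h => by
    have := congrArg norm h
    rw [norm_mul, norm_one] at this
    nlinarith [norm_nonneg u, norm_nonneg v]
  exact sub_eq_zero.1 ((mul_eq_zero.1 hfac).resolve_right (sub_ne_zero.2 huv1))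

lemma norm_eq_one_of_joukowski_mem_segC {F : ℝ} (hF : 0 < F) {u : ℂ} (hu : u ≠ 0)
    (h : joukowski F u ∈ segC F) : ‖u‖ = 1 := by
  obtain ⟨him, hl, hr⟩ := h
  set c := (joukowski F u).re / F
  have hF' : (F : ℂ) ≠ 0 := ofReal_ne_zero.2 hF.ne'
  have hJ : joukowski F u = c * F := by
    apply Complex.ext <;> simp [c, him, hF.ne']
  have hc : u ^ 2 - 2 * c * u + 1 = 0 := by
    unfold joukowski at hJ
    field_simp at hJ
    linear_combination hJ
  have hre := congrArg re hc
  have him := congrArg im hc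
  simp only [sq, sub_re, add_re, mul_re, sub_im, add_im, mul_im, ofReal_re, ofReal_im, re_ofNat,
    im_ofNat, one_re, one_im, zero_re, zero_im] at hre him
  have hc1 : c ^ 2 ≤ 1 := by
    have : |c| ≤ 1 := by
      rw [abs_le, le_div_iff₀ hF, div_le_iff₀ hF]; constructor <;> linarith
    nlinarith [abs_nonneg c, sq_abs c]
  have hnorm : ‖u‖ ^ 2 = 1 := by
    rw [← normSq_eq_norm_sq, normSq_apply]
    rcases mul_eq_zero.1 (show u.im * (u.re - c) = 0 by linarith) with h | h
    · rw [h] at hre ⊢; nlinarith [sq_nonneg (u.re - c)]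
    · rw [sub_eq_zero.1 h] at hre ⊢; linarith
  exact (pow_eq_one_iff_of_nonneg (norm_nonneg u) two_ne_zero).1 hnorm

lemma mapsTo_funU {F : ℝ} (hF : 0 < F) : MapsTo (funU F) (segC F)ᶜ (ball 0 1 \ {0}) :=
  fun z hz => ⟨mem_ball_zero_iff.2 (norm_funU_lt_one hF hz), funU_ne_zero hF.ne' z⟩

lemma mapsTo_joukowski {F : ℝ} (hF : 0 < F) : MapsTo (joukowski F) (ball 0 1 \ {0}) (segC F)ᶜ :=
  fun _ ⟨hu1, hu0⟩ h =>
    (norm_eq_one_of_joukowski_mem_segC hF hu0 h ▸ mem_ball_zero_iff.1 hu1).false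

lemma invOn_joukowski_funU {F : ℝ} (hF : 0 < F) :
    InvOn (joukowski F) (funU F) (segC F)ᶜ (ball 0 1 \ {0}) :=
  ⟨fun z _ => joukowski_funU hF.ne' z, fun _ hu =>
    joukowski_injOn hF.ne' (mapsTo_funU hF (mapsTo_joukowski hF hu)) hu (joukowski_funU hF.ne' _)⟩

/-- for `F > 0`, `U_F` maps `ℂ ∖ [−F,F]` bijectively onto the punctured
open unit disc: it is injective on `ℂ ∖ [−F,F]` and its image of that set equals
`Metric.ball 0 1 ∖ {0}`. -/
theorem stmt7 (F : ℝ) (hF : 0 < F) :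
    Set.InjOn (funU F) (segC F)ᶜ ∧
    funU F '' (segC F)ᶜ = Metric.ball (0 : ℂ) 1 \ {0} := by
  have h := (invOn_joukowski_funU hF).bijOn (mapsTo_funU hF) (mapsTo_joukowski hF)
  exact ⟨h.injOn, h.image_eq⟩
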